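/- arXiv:1910.10818 — 4 statements merged into one kernel-verified Lean document; each statement's English description precedes it below -/
import Mathlib

section
/- Let X be a standard Borel (Polish) measurable space, κ a Markov kernel from X to X, and K, T measurable subsets of X with T ⊆ K. Fix N ∈ ℕ and define the value functions V_N(x) = 1_T(x), V_k(x) = 1_T(x) + 1_{K\T}(x) · ∫_X V_{k+1}(y) κ(dy | x) for k < N. Let P_{x_0} denote the law of the time-homogeneous Markov chain (x_0, x_1, x_2, …) with transition kernel κ started deterministically at x_0 ∈ X (the Ionescu–Tulcea trajectory measure on X^ℕ). Then for every x_0 ∈ X, V_0(x_0) = ∫ ∑_{j=0}^{N} (∏_{i=0}^{j-1} 1_{K\T}(ω_i)) · 1_T(ω_j) dP_{x_0}(ω), i.e., the backward recursion computes the first-hitting time safety probability r_{x_0}(K,T). -/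
/-!
Let `F m ω = ∑_{j ≤ m} (∏_{i < j} 1_{K\T}(ω i)) 1_T(ω j)`. Splitting off the first
coordinate gives `F (m+1) (x, ω) = 1_T x + 1_{K\T} x · F m ω`. Integrating this identity
against the Markov recursion `η x = ∫ (x prepended to a trajectory drawn from η y) dκ(y | x)`
shows that `x ↦ ∫ F m dη x` satisfies the backward recursion of `V (N - m)`, so the two agree
by induction on `m`.
-/

open MeasureTheory ProbabilityTheory

/-- Prepending a point to a trajectory: `prepend a ω = (a, ω 0, ω 1, …)`. -/
def prependTraj {X : Type*} (a : X) (ω : ℕ → X) : ℕ → X :=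
  fun n => if n = 0 then a else ω (n - 1)

section Trajectory

variable {X : Type*}

@[simp]
lemma prependTraj_zero (a : X) (ω : ℕ → X) : prependTraj a ω 0 = a := rfl

@[simp]
lemma prependTraj_succ (a : X) (ω : ℕ → X) (n : ℕ) : prependTraj a ω (n + 1) = ω n := rfl

@[fun_prop]
lemma measurable_prependTraj [MeasurableSpace X] (a : X) : Measurable (prependTraj a) := by
  refine measurable_pi_lambda _ fun n => ?_
  cases n with
  | zero => exact measurable_const
  | succ n => exact measurable_pi_apply n

end Trajectory

section HittingSum

variable {X : Type*}

/-- For `g = 1_{K \ T}` and `h = 1_T` the summands are indicators of disjoint events, and the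
sum is the indicator that `ω` reaches `T` within `m` steps while staying in `K \ T` before. -/
def hittingSum (g h : X → ℝ) (m : ℕ) (ω : ℕ → X) : ℝ :=
  ∑ j ∈ Finset.range (m + 1), (∏ i ∈ Finset.range j, g (ω i)) * h (ω j)

lemma hittingSum_zero (g h : X → ℝ) (ω : ℕ → X) : hittingSum g h 0 ω = h (ω 0) := by
  simp [hittingSum]

lemma hittingSum_succ_prependTraj (g h : X → ℝ) (m : ℕ) (x : X) (ω : ℕ → X) :
    hittingSum g h (m + 1) (prependTraj x ω) = h x + g x * hittingSum g h m ω := by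
  simp only [hittingSum, Finset.sum_range_succ' _ (m + 1), Finset.prod_range_succ',
    prependTraj_succ, prependTraj_zero, Finset.prod_range_zero, one_mul, Finset.mul_sum]
  rw [add_comm]
  congr 1
  exact Finset.sum_congr rfl fun j _ => by ring

lemma measurable_hittingSum [MeasurableSpace X] {g h : X → ℝ} (hg : Measurable g)
    (hh : Measurable h) (m : ℕ) : Measurable (hittingSum g h m) := by
  unfold hittingSum
  fun_prop

lemma norm_hittingSum_le {g h : X → ℝ} {Cg Ch : ℝ} (hgC : ∀ x, ‖g x‖ ≤ Cg)
    (hhC : ∀ x, ‖h x‖ ≤ Ch) (m : ℕ) (ω : ℕ → X) :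
    ‖hittingSum g h m ω‖ ≤ ∑ j ∈ Finset.range (m + 1), Cg ^ j * Ch := by
  refine (norm_sum_le _ _).trans (Finset.sum_le_sum fun j _ => ?_)
  have hprod : ‖∏ i ∈ Finset.range j, g (ω i)‖ ≤ Cg ^ j := by
    rw [norm_prod]
    calc ∏ i ∈ Finset.range j, ‖g (ω i)‖ ≤ ∏ _i ∈ Finset.range j, Cg :=
          Finset.prod_le_prod (fun i _ => norm_nonneg _) (fun i _ => hgC (ω i))
      _ = Cg ^ j := by rw [Finset.prod_const, Finset.card_range]
  rw [norm_mul]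
  have hCg : 0 ≤ Cg := (norm_nonneg _).trans (hgC (ω 0))
  exact mul_le_mul hprod (hhC _) (norm_nonneg _) (pow_nonneg hCg j)

end HittingSum

section Kernel

variable {X Y E : Type*} [MeasurableSpace X] [MeasurableSpace Y]
  [NormedAddCommGroup E] [NormedSpace ℝ E]

lemma integrable_integral_kernel_of_norm_le {η : Kernel X Y} [IsMarkovKernel η]
    {μ : Measure X} [IsFiniteMeasure μ] {f : Y → E} (hf : StronglyMeasurable f) {C : ℝ}
    (hfC : ∀ ω, ‖f ω‖ ≤ C) : Integrable (fun y => ∫ ω, f ω ∂η y) μ := by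
  refine Integrable.of_bound hf.integral_kernel.aestronglyMeasurable C (ae_of_all _ fun y => ?_)
  simpa using norm_integral_le_of_norm_le_const (μ := η y) (ae_of_all _ hfC)

lemma integral_eq_integral_integral_prependTraj {κ : Kernel X X} {η : Kernel X (ℕ → X)}
    [IsSFiniteKernel κ] [IsSFiniteKernel η] {x : X}
    (hηx : η x = (κ x).bind fun y => (η y).map (prependTraj x))
    {f : (ℕ → X) → E} (hf : StronglyMeasurable f) (hfi : Integrable f (η x)) :
    ∫ ω, f ω ∂η x = ∫ y, ∫ ω, f (prependTraj x ω) ∂η y ∂κ x := by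
  have hcomp : η x = (η.map (prependTraj x) ∘ₖ κ) x := by
    rw [Kernel.comp_apply, hηx]
    congr 1 with y : 1
    exact (Kernel.map_apply _ (measurable_prependTraj x) y).symm
  rw [hcomp] at hfi ⊢
  rw [Kernel.integral_comp hfi]
  congr 1 with y
  rw [Kernel.map_apply _ (measurable_prependTraj x),
    integral_map (measurable_prependTraj x).aemeasurable hf.aestronglyMeasurable]

end Kernel

section BackwardRecursion

variable {X : Type*} [MeasurableSpace X] {κ : Kernel X X} {η : Kernel X (ℕ → X)}
  [IsMarkovKernel κ] [IsMarkovKernel η] {g h : X → ℝ} {x : X}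

lemma integral_hittingSum_zero (hηx : η x = (κ x).bind fun y => (η y).map (prependTraj x))
    (hh : Measurable h) {Ch : ℝ} (hhC : ∀ x, ‖h x‖ ≤ Ch) :
    ∫ ω, hittingSum g h 0 ω ∂η x = h x := by
  have hm : Measurable fun ω : ℕ → X => h (ω 0) := hh.comp (measurable_pi_apply 0)
  simp_rw [hittingSum_zero]
  rw [integral_eq_integral_integral_prependTraj hηx hm.stronglyMeasurable
    (Integrable.of_bound hm.aestronglyMeasurable Ch (ae_of_all _ fun ω => hhC (ω 0)))]
  simp

lemma integral_hittingSum_succ (hηx : η x = (κ x).bind fun y => (η y).map (prependTraj x))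
    (hg : Measurable g) (hh : Measurable h) {Cg Ch : ℝ} (hgC : ∀ x, ‖g x‖ ≤ Cg)
    (hhC : ∀ x, ‖h x‖ ≤ Ch) (m : ℕ) :
    ∫ ω, hittingSum g h (m + 1) ω ∂η x =
      h x + g x * ∫ y, ∫ ω, hittingSum g h m ω ∂η y ∂κ x := by
  have hm (n : ℕ) := measurable_hittingSum hg hh n
  have hint (n : ℕ) (μ : Measure (ℕ → X)) [IsFiniteMeasure μ] :
      Integrable (hittingSum g h n) μ :=
    .of_bound (hm n).aestronglyMeasurable _ (ae_of_all _ (norm_hittingSum_le hgC hhC n))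
  calc ∫ ω, hittingSum g h (m + 1) ω ∂η x
      = ∫ y, ∫ ω, (h x + g x * hittingSum g h m ω) ∂η y ∂κ x := by
        simp_rw [integral_eq_integral_integral_prependTraj hηx (hm (m + 1)).stronglyMeasurable
          (hint _ _), hittingSum_succ_prependTraj]
    _ = ∫ y, (h x + g x * ∫ ω, hittingSum g h m ω ∂η y) ∂κ x := by
        congr 1 with y
        rw [integral_add (integrable_const _) ((hint m _).const_mul _), integral_const_mul]
        simp
    _ = h x + g x * ∫ y, ∫ ω, hittingSum g h m ω ∂η y ∂κ x := by
        rw [integral_add (integrable_const _) ((integrable_integral_kernel_of_norm_le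
          (hm m).stronglyMeasurable (norm_hittingSum_le hgC hhC m)).const_mul _),
          integral_const_mul]
        simp

end BackwardRecursion

theorem backward_recursion_eq_first_hitting_probability_general
    {X : Type*} [MeasurableSpace X]
    (κ : Kernel X X) [IsMarkovKernel κ]
    (K T : Set X) (hK : MeasurableSet K) (hT : MeasurableSet T)
    (N : ℕ) (V : ℕ → X → ℝ)
    (hVN : ∀ x, V N x = T.indicator (fun _ => (1 : ℝ)) x)
    (hVk : ∀ k < N, ∀ x, V k x =
      T.indicator (fun _ => (1 : ℝ)) x +
        (K \ T).indicator (fun _ => (1 : ℝ)) x * ∫ y, V (k + 1) y ∂(κ x))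
    (η : Kernel X (ℕ → X)) [IsMarkovKernel η]
    (hη : ∀ x, η x = (κ x).bind fun y => (η y).map (prependTraj x)) :
    ∀ x₀ : X, V 0 x₀ =
      ∫ ω, (∑ j ∈ Finset.range (N + 1),
        (∏ i ∈ Finset.range j, (K \ T).indicator (fun _ => (1 : ℝ)) (ω i)) *
          T.indicator (fun _ => (1 : ℝ)) (ω j)) ∂(η x₀) := by
  have hg : Measurable ((K \ T).indicator fun _ => (1 : ℝ)) :=
    measurable_const.indicator (hK.diff hT)
  have hh : Measurable (T.indicator fun _ => (1 : ℝ)) := measurable_const.indicator hT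
  have hC (s : Set X) (x : X) : ‖s.indicator (fun _ => (1 : ℝ)) x‖ ≤ 1 :=
    (norm_indicator_le_norm_self _ _).trans norm_one.le
  have key (m : ℕ) : ∀ k, k + m = N → V k = fun x =>
      ∫ ω, hittingSum ((K \ T).indicator fun _ => 1) (T.indicator fun _ => 1) m ω ∂η x := by
    induction m with
    | zero =>
      intro k (hk : k = N)
      funext x
      rw [hk, hVN, integral_hittingSum_zero (hη x) hh (hC T)]
    | succ m ih =>
      intro k hk
      funext x
      rw [hVk k (by omega) x, ih (k + 1) (by omega),
        integral_hittingSum_succ (hη x) hg hh (hC (K \ T)) (hC T)]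
  exact fun x₀ => congrFun (key N 0 N.zero_add) x₀

/-- Let `X` be a standard Borel space, `κ` a Markov kernel from `X` to `X`, and
`T ⊆ K` measurable sets.  Let `η x₀` be the law of the time-homogeneous Markov chain
with transition kernel `κ` started deterministically at `x₀` (the Ionescu–Tulcea
trajectory measure on `X^ℕ`), characterized by its defining Markov-chain recursion:
the trajectory from `x` is `x` prepended to the trajectory from a point `y ~ κ(·|x)`.
Then the value functions of the backward recursion `V N = 1_T`,
`V k x = 1_T x + 1_{K\T} x · ∫ V (k+1) dκ(·|x)` compute the first-hitting time safety
probability: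
`V 0 x₀ = ∫ ∑_{j=0}^{N} (∏_{i=0}^{j-1} 1_{K\T}(ω i)) · 1_T(ω j) dη x₀(ω)`. -/
theorem backward_recursion_eq_first_hitting_probability
    {X : Type*} [MeasurableSpace X] [StandardBorelSpace X] [Nonempty X]
    (κ : Kernel X X) [IsMarkovKernel κ]
    (K T : Set X) (hK : MeasurableSet K) (hT : MeasurableSet T) (hTK : T ⊆ K)
    (N : ℕ) (V : ℕ → X → ℝ)
    (hVN : ∀ x, V N x = T.indicator (fun _ => (1 : ℝ)) x)
    (hVk : ∀ k < N, ∀ x, V k x =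
      T.indicator (fun _ => (1 : ℝ)) x +
        (K \ T).indicator (fun _ => (1 : ℝ)) x * ∫ y, V (k + 1) y ∂(κ x))
    (η : Kernel X (ℕ → X)) [IsMarkovKernel η]
    (hη : ∀ x, η x = (κ x).bind fun y => (η y).map (prependTraj x)) :
    ∀ x₀ : X, V 0 x₀ =
      ∫ ω, (∑ j ∈ Finset.range (N + 1),
        (∏ i ∈ Finset.range j, (K \ T).indicator (fun _ => (1 : ℝ)) (ω i)) *
          T.indicator (fun _ => (1 : ℝ)) (ω j)) ∂(η x₀) :=
  backward_recursion_eq_first_hitting_probability_general κ K T hK hT N V hVN hVk η hη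
end

section
/- Let X be a measurable space, κ a Markov kernel from X to X, K, T measurable subsets of X with T ⊆ K, and N ∈ ℕ. Let V_N, …, V_0 be defined by the exact backward recursion V_N = 1_T, V_k(x) = 1_T(x) + 1_{K\T}(x) ∫_X V_{k+1} dκ(·|x). Suppose W_N, …, W_0 : X → ℝ are bounded measurable functions with W_N = 1_T such that for every k < N and every x ∈ X, |W_k(x) − (1_T(x) + 1_{K\T}(x) ∫_X W_{k+1}(y) κ(dy|x))| ≤ ε for some ε ≥ 0 (a per-step approximation error of at most ε). Then for every k ∈ {0, …, N} and every x ∈ X, |W_k(x) − V_k(x)| ≤ (N − k)·ε; in particular the approximate safety probability satisfies |W_0(x) − V_0(x)| ≤ N·ε. -/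
open MeasureTheory ProbabilityTheory

/-! The exact and the approximate recursions apply the same operator
`f ↦ 1_T + 1_{K\T} · ∫ f dκ(·|x)`, which is `1`-Lipschitz for the sup distance because each
`κ(·|x)` is a probability measure and `|1_{K\T}| ≤ 1`. Hence every backward step adds at most
`ε` to an error that vanishes at time `N`. Measurability of `V k`, without which its integral
would be the junk value `0`, is carried along the same downward induction. -/

section ReachAvoid

variable {X : Type*} [MeasurableSpace X]

noncomputable def reachAvoidOp (κ : Kernel X X) (K T : Set X) (f : X → ℝ) (x : X) : ℝ :=
  T.indicator (fun _ => (1 : ℝ)) x + (K \ T).indicator (fun _ => (1 : ℝ)) x * ∫ y, f y ∂(κ x)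

variable {κ : Kernel X X} {K T : Set X}

lemma measurable_reachAvoidOp (hK : MeasurableSet K) (hT : MeasurableSet T) {f : X → ℝ}
    (hf : Measurable f) : Measurable (reachAvoidOp κ K T f) :=
  (measurable_const.indicator hT).add
    ((measurable_const.indicator (hK.diff hT)).mul
      (hf.stronglyMeasurable.integral_kernel (κ := κ)).measurable)

lemma abs_reachAvoidOp_sub_le [IsMarkovKernel κ] {f g : X → ℝ} {c : ℝ} {x : X}
    (hf : Integrable f (κ x)) (hg : Integrable g (κ x)) (hfg : ∀ y, |f y - g y| ≤ c) :
    |reachAvoidOp κ K T f x - reachAvoidOp κ K T g x| ≤ c := by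
  have hint : |∫ y, (f y - g y) ∂(κ x)| ≤ c := by
    simpa using norm_integral_le_of_norm_le_const (μ := κ x) (f := fun y => f y - g y)
      (ae_of_all _ hfg)
  have hind : |(K \ T).indicator (fun _ => (1 : ℝ)) x| ≤ 1 := by
    by_cases hx : x ∈ K \ T <;> simp [hx]
  calc |reachAvoidOp κ K T f x - reachAvoidOp κ K T g x|
      = |(K \ T).indicator (fun _ => (1 : ℝ)) x| * |∫ y, (f y - g y) ∂(κ x)| := by
        rw [reachAvoidOp, reachAvoidOp, integral_sub hf hg, ← abs_mul]
        ring_nf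
    _ ≤ c := mul_le_of_le_one_left (abs_nonneg _) hind |>.trans hint

end ReachAvoid

lemma integrable_of_abs_sub_le {α : Type*} [MeasurableSpace α] {μ : Measure α}
    [IsFiniteMeasure μ] {f g : α → ℝ} {c : ℝ} (hf : Integrable f μ) (hg : Measurable g)
    (hfg : ∀ y, |f y - g y| ≤ c) : Integrable g μ :=
  (hf.abs.add (integrable_const c)).mono' hg.aestronglyMeasurable <| ae_of_all _ fun y => by
    have := hfg y
    simp only [Real.norm_eq_abs, Pi.add_apply]
    linarith [abs_sub_abs_le_abs_sub (g y) (f y), abs_sub_comm (f y) (g y)]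

theorem approximate_value_functions_error_bound_general
    {X : Type*} [MeasurableSpace X] (κ : Kernel X X) [IsMarkovKernel κ]
    (K T : Set X) (hK : MeasurableSet K) (hT : MeasurableSet T)
    (N : ℕ) (ε : ℝ) (V W : ℕ → X → ℝ)
    (hVN : ∀ x, V N x = T.indicator (fun _ => (1 : ℝ)) x)
    (hVk : ∀ k < N, ∀ x, V k x =
      T.indicator (fun _ => (1 : ℝ)) x +
        (K \ T).indicator (fun _ => (1 : ℝ)) x * ∫ y, V (k + 1) y ∂(κ x))
    (hWmeas : ∀ k ≤ N, Measurable (W k))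
    (hWbdd : ∀ k ≤ N, ∃ C : ℝ, ∀ x, |W k x| ≤ C)
    (hWN : ∀ x, W N x = T.indicator (fun _ => (1 : ℝ)) x)
    (hWk : ∀ k < N, ∀ x,
      |W k x - (T.indicator (fun _ => (1 : ℝ)) x +
        (K \ T).indicator (fun _ => (1 : ℝ)) x * ∫ y, W (k + 1) y ∂(κ x))| ≤ ε) :
    (∀ k ≤ N, ∀ x, |W k x - V k x| ≤ ((N : ℝ) - (k : ℝ)) * ε) ∧
      (∀ x, |W 0 x - V 0 x| ≤ (N : ℝ) * ε) := by
  have key : ∀ k ≤ N, Measurable (V k) ∧ ∀ x, |W k x - V k x| ≤ ((N : ℝ) - k) * ε := by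
    intro k hk
    induction hk using Nat.decreasingInduction with
    | self => exact ⟨funext hVN ▸ measurable_const.indicator hT, fun x => by simp [hVN, hWN]⟩
    | of_succ k hk ih =>
      obtain ⟨hVmeas, herr⟩ := ih
      obtain ⟨C, hC⟩ := hWbdd (k + 1) hk
      have hWint (x : X) : Integrable (W (k + 1)) (κ x) :=
        .of_bound (hWmeas _ hk).aestronglyMeasurable C (ae_of_all _ hC)
      have hV : V k = reachAvoidOp κ K T (V (k + 1)) := funext (hVk k hk)
      refine ⟨hV ▸ measurable_reachAvoidOp hK hT hVmeas, fun x => ?_⟩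
      calc |W k x - V k x|
          ≤ |W k x - reachAvoidOp κ K T (W (k + 1)) x|
            + |reachAvoidOp κ K T (W (k + 1)) x - reachAvoidOp κ K T (V (k + 1)) x| := by
            rw [hV]; exact abs_sub_le _ _ _
        _ ≤ ε + ((N : ℝ) - (k + 1 : ℕ)) * ε :=
            add_le_add (hWk k hk x) <| abs_reachAvoidOp_sub_le (hWint x)
              (integrable_of_abs_sub_le (hWint x) hVmeas herr) herr
        _ = ((N : ℝ) - k) * ε := by push_cast; ring
  exact ⟨fun k hk => (key k hk).2, fun x => by simpa using (key 0 N.zero_le).2 x⟩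

/-- Let `κ` be a Markov kernel from `X` to `X` and `T ⊆ K` measurable sets.  Let
`V N, …, V 0` be the exact backward recursion `V N = 1_T`,
`V k x = 1_T x + 1_{K\T} x · ∫ V (k+1) dκ(·|x)`, and let `W N, …, W 0` be bounded
measurable functions with `W N = 1_T` incurring a per-step approximation error of at
most `ε ≥ 0`:
`|W k x − (1_T x + 1_{K\T} x · ∫ W (k+1) dκ(·|x))| ≤ ε` for all `k < N` and `x`.
Then `|W k x − V k x| ≤ (N − k)·ε` for every `k ≤ N` and every `x`; in particular
`|W 0 x − V 0 x| ≤ N·ε`. -/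
theorem approximate_value_functions_error_bound
    {X : Type*} [MeasurableSpace X] (κ : Kernel X X) [IsMarkovKernel κ]
    (K T : Set X) (hK : MeasurableSet K) (hT : MeasurableSet T) (hTK : T ⊆ K)
    (N : ℕ) (ε : ℝ) (hε : 0 ≤ ε) (V W : ℕ → X → ℝ)
    (hVN : ∀ x, V N x = T.indicator (fun _ => (1 : ℝ)) x)
    (hVk : ∀ k < N, ∀ x, V k x =
      T.indicator (fun _ => (1 : ℝ)) x +
        (K \ T).indicator (fun _ => (1 : ℝ)) x * ∫ y, V (k + 1) y ∂(κ x))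
    (hWmeas : ∀ k ≤ N, Measurable (W k))
    (hWbdd : ∀ k ≤ N, ∃ C : ℝ, ∀ x, |W k x| ≤ C)
    (hWN : ∀ x, W N x = T.indicator (fun _ => (1 : ℝ)) x)
    (hWk : ∀ k < N, ∀ x,
      |W k x - (T.indicator (fun _ => (1 : ℝ)) x +
        (K \ T).indicator (fun _ => (1 : ℝ)) x * ∫ y, W (k + 1) y ∂(κ x))| ≤ ε) :
    (∀ k ≤ N, ∀ x, |W k x - V k x| ≤ ((N : ℝ) - (k : ℝ)) * ε) ∧
      (∀ x, |W 0 x - V 0 x| ≤ (N : ℝ) * ε) :=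
  approximate_value_functions_error_bound_general κ K T hK hT N ε V W hVN hVk hWmeas hWbdd hWN hWk
end

section
/- Let Λ be a probability measure on ℝⁿ, let μ be the uniform probability measure on [0, 2π], and fix x, x' ∈ ℝⁿ. Then the random feature product is an unbiased estimator of the kernel: ∫_{ℝⁿ} ∫_0^{2π} (√2 cos(⟨ω, x⟩ + b)) · (√2 cos(⟨ω, x'⟩ + b)) dμ(b) dΛ(ω) = ∫_{ℝⁿ} cos(⟨ω, x − x'⟩) dΛ(ω). -/
/-! Product-to-sum turns the integrand into `cos ⟪ω, x - x'⟫ + cos (⟪ω, x + x'⟫ + 2b)`; the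
second term averages to zero over the full period `[0, 2π]` in `b`, pointwise in `ω`. -/

open MeasureTheory Set Real
open scoped RealInnerProductSpace

theorem integral_uniform_Icc_eq_intervalAverage {E : Type*} [NormedAddCommGroup E]
    [NormedSpace ℝ E] (f : ℝ → E) {a b : ℝ} (hab : a ≤ b) :
    ∫ x, f x ∂((ENNReal.ofReal (b - a))⁻¹ • volume.restrict (Icc a b)) = ⨍ x in a..b, f x := by
  rw [interval_average_eq, integral_smul_measure, intervalIntegral.integral_of_le hab,
    integral_Icc_eq_integral_Ioc, ENNReal.toReal_inv, ENNReal.toReal_ofReal (sub_nonneg.2 hab)]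

theorem integral_cos_add_intCast_mul_eq_zero (c : ℝ) {k : ℤ} (hk : k ≠ 0) :
    ∫ b in (0 : ℝ)..2 * π, cos (c + k * b) = 0 := by
  rw [intervalIntegral.integral_comp_add_mul _ (Int.cast_ne_zero.2 hk), integral_cos, mul_zero,
    add_zero, sin_add_int_mul_two_pi, sub_self, smul_zero]

theorem intervalAverage_sqrt_two_cos_mul_sqrt_two_cos (a a' : ℝ) :
    ⨍ b in (0 : ℝ)..2 * π, (√2 * cos (a + b)) * (√2 * cos (a' + b)) = cos (a - a') := by
  have hprod (b : ℝ) : (√2 * cos (a + b)) * (√2 * cos (a' + b)) =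
      cos (a - a') + cos ((a + a') + ((2 : ℤ) : ℝ) * b) := by
    rw [mul_mul_mul_comm, mul_self_sqrt zero_le_two, ← mul_assoc, two_mul_cos_mul_cos]
    congr 2 <;> push_cast <;> ring
  have hcos : IntervalIntegrable (fun b => cos ((a + a') + ((2 : ℤ) : ℝ) * b)) volume 0 (2 * π) :=
    (continuous_cos.comp (by fun_prop)).intervalIntegrable _ _
  simp_rw [interval_average_eq, hprod]
  rw [intervalIntegral.integral_add intervalIntegrable_const hcos,
    integral_cos_add_intCast_mul_eq_zero _ two_ne_zero, intervalIntegral.integral_const, sub_zero,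
    add_zero, smul_eq_mul, smul_eq_mul, inv_mul_cancel_left₀ two_pi_pos.ne']

theorem random_fourier_features_unbiased_general
    (n : ℕ) (Λ : Measure (EuclideanSpace ℝ (Fin n)))
    (x x' : EuclideanSpace ℝ (Fin n)) :
    ∫ ω, (∫ b,
        (Real.sqrt 2 * Real.cos (⟪ω, x⟫ + b)) * (Real.sqrt 2 * Real.cos (⟪ω, x'⟫ + b))
          ∂((ENNReal.ofReal (2 * π))⁻¹ • volume.restrict (Set.Icc (0 : ℝ) (2 * π)))) ∂Λ =
      ∫ ω, Real.cos ⟪ω, x - x'⟫ ∂Λ := by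
  congr 1
  funext ω
  have uniform := integral_uniform_Icc_eq_intervalAverage
    (fun b => (√2 * cos (⟪ω, x⟫ + b)) * (√2 * cos (⟪ω, x'⟫ + b))) two_pi_pos.le
  rw [sub_zero] at uniform
  rw [uniform, intervalAverage_sqrt_two_cos_mul_sqrt_two_cos, inner_sub_right]

/-- Let `Λ` be a probability measure on `ℝⁿ`, `μ` the uniform probability measure on
`[0, 2π]`, and fix `x, x' ∈ ℝⁿ`.  Then the random Fourier feature product
`z_{ω,b}(x) z_{ω,b}(x') = 2 cos(⟪ω, x⟫ + b) cos(⟪ω, x'⟫ + b)` is an unbiased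
estimator of the kernel:
`∫∫ (√2 cos(⟪ω,x⟫+b))(√2 cos(⟪ω,x'⟫+b)) dμ(b) dΛ(ω) = ∫ cos⟪ω, x−x'⟫ dΛ(ω)`. -/
theorem random_fourier_features_unbiased
    (n : ℕ) (Λ : Measure (EuclideanSpace ℝ (Fin n))) [IsProbabilityMeasure Λ]
    (x x' : EuclideanSpace ℝ (Fin n)) :
    ∫ ω, (∫ b,
        (Real.sqrt 2 * Real.cos (⟪ω, x⟫ + b)) * (Real.sqrt 2 * Real.cos (⟪ω, x'⟫ + b))
          ∂((ENNReal.ofReal (2 * π))⁻¹ • volume.restrict (Set.Icc (0 : ℝ) (2 * π)))) ∂Λ =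
      ∫ ω, Real.cos ⟪ω, x - x'⟫ ∂Λ :=
  random_fourier_features_unbiased_general n Λ x x'
end

section
/- Let Λ be a probability measure on ℝⁿ, μ the uniform probability measure on [0, 2π], and fix x, x' ∈ ℝⁿ. Let (ω_1, b_1), …, (ω_D, b_D) be i.i.d. with common law Λ ⊗ μ, and define the empirical kernel estimate k̂_D(x, x') = (1/D) ∑_{i=1}^{D} 2 cos(⟨ω_i, x⟩ + b_i) cos(⟨ω_i, x'⟩ + b_i), and let k(x, x') = ∫ cos(⟨ω, x − x'⟩) dΛ(ω). Then for every ε > 0, P(|k̂_D(x, x') − k(x, x')| ≥ ε) ≤ 2 exp(−D ε² / 8). -/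
/-!
Averaging over the uniform phase kills the second term of
`2 cos(⟪ω, x⟫ + b) cos(⟪ω, x'⟫ + b) = cos ⟪ω, x - x'⟫ + cos (⟪ω, x + x'⟫ + 2b)`, so each summand
is an unbiased estimate of `k(x, x')` with values in `[-2, 2]`. By Hoeffding's lemma the centred
summands are sub-Gaussian with variance proxy `4`, and Hoeffding's inequality on both tails of
their independent sum gives `2 exp (-2 D ε² / (2 - (-2))²) = 2 exp (-D ε² / 8)`.
-/

open MeasureTheory ProbabilityTheory
open scoped RealInnerProductSpace Real ENNReal NNReal

open Real Finset

section Hoeffding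

variable {Ω : Type*} [MeasurableSpace Ω] {μ : Measure Ω}

lemma measureReal_abs_sum_range_ge_le_of_iIndepFun [IsFiniteMeasure μ] {X : ℕ → Ω → ℝ}
    (h_indep : iIndepFun X μ) {c : ℝ≥0} {n : ℕ} (h_subG : ∀ i < n, HasSubgaussianMGF (X i) c μ)
    {ε : ℝ} (hε : 0 ≤ ε) :
    μ.real {ω | ε ≤ |∑ i ∈ range n, X i ω|} ≤ 2 * exp (-ε ^ 2 / (2 * n * c)) := by
  have h_indep_neg : iIndepFun (fun i ω ↦ -X i ω) μ :=
    h_indep.comp (fun _ x ↦ -x) fun _ ↦ measurable_neg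
  have h_split : {ω | ε ≤ |∑ i ∈ range n, X i ω|} ⊆
      {ω | ε ≤ ∑ i ∈ range n, X i ω} ∪ {ω | ε ≤ ∑ i ∈ range n, -X i ω} := by
    intro ω hω
    simpa only [Set.mem_union, Set.mem_ofPred_eq, sum_neg_distrib, le_abs] using hω
  calc μ.real {ω | ε ≤ |∑ i ∈ range n, X i ω|}
      ≤ μ.real {ω | ε ≤ ∑ i ∈ range n, X i ω} + μ.real {ω | ε ≤ ∑ i ∈ range n, -X i ω} :=
        (measureReal_mono h_split).trans (measureReal_union_le _ _)
    _ ≤ exp (-ε ^ 2 / (2 * n * c)) + exp (-ε ^ 2 / (2 * n * c)) :=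
        add_le_add (HasSubgaussianMGF.measure_sum_range_ge_le_of_iIndepFun h_indep h_subG hε)
          (HasSubgaussianMGF.measure_sum_range_ge_le_of_iIndepFun h_indep_neg
            (fun i hi ↦ (h_subG i hi).neg) hε)
    _ = 2 * exp (-ε ^ 2 / (2 * n * c)) := (two_mul _).symm

lemma measureReal_abs_average_sub_ge_le [IsProbabilityMeasure μ] {X : ℕ → Ω → ℝ}
    (h_indep : iIndepFun X μ) (h_meas : ∀ i, AEMeasurable (X i) μ) {a b m : ℝ}
    (h_mem : ∀ i, ∀ᵐ ω ∂μ, X i ω ∈ Set.Icc a b) (h_mean : ∀ i, μ[X i] = m) (n : ℕ) {ε : ℝ}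
    (hε : 0 ≤ ε) :
    μ.real {ω | ε ≤ |1 / (n : ℝ) * ∑ i ∈ range n, X i ω - m|} ≤
      2 * exp (-2 * n * ε ^ 2 / (b - a) ^ 2) := by
  rcases n.eq_zero_or_pos with rfl | hn
  · simpa using measureReal_le_one.trans one_le_two
  have hn' : (0 : ℝ) < n := Nat.cast_pos.mpr hn
  have h_centered_indep : iIndepFun (fun i ω ↦ X i ω - m) μ :=
    h_indep.comp (fun _ x ↦ x - m) fun _ ↦ measurable_sub_const m
  have h_subG : ∀ i < n, HasSubgaussianMGF (fun ω ↦ X i ω - m) ((‖b - a‖₊ / 2) ^ 2) μ := by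
    intro i _
    simpa only [h_mean] using hasSubgaussianMGF_of_mem_Icc (h_meas i) (h_mem i)
  have h_event : {ω | ε ≤ |1 / (n : ℝ) * ∑ i ∈ range n, X i ω - m|} =
      {ω | n * ε ≤ |∑ i ∈ range n, (X i ω - m)|} := by
    ext ω
    rw [Set.mem_ofPred_eq, Set.mem_ofPred_eq, sum_sub_distrib, sum_const, card_range, nsmul_eq_mul,
      ← mul_le_mul_iff_right₀ hn', ← abs_of_pos hn', ← abs_mul, abs_of_pos hn']
    congr! 2
    field_simp
  rw [h_event]
  refine (measureReal_abs_sum_range_ge_le_of_iIndepFun h_centered_indep h_subG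
    (by positivity)).trans_eq ?_
  congr 2
  push_cast
  rw [Real.norm_eq_abs, div_pow, sq_abs, show -(n * ε) ^ 2 = n * (-n * ε ^ 2) by ring,
    show 2 * n * ((b - a) ^ 2 / 2 ^ 2) = n * ((b - a) ^ 2 / 2) by ring,
    mul_div_mul_left _ _ hn'.ne', div_div_eq_mul_div]
  ring

end Hoeffding

noncomputable def uniformPhase : Measure ℝ :=
  (ENNReal.ofReal (2 * π))⁻¹ • volume.restrict (Set.Icc 0 (2 * π))

instance : IsProbabilityMeasure uniformPhase where
  measure_univ := by
    rw [uniformPhase, Measure.smul_apply, Measure.restrict_apply_univ, Real.volume_Icc, sub_zero,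
      smul_eq_mul, ENNReal.inv_mul_cancel (by simp [pi_pos]) ENNReal.ofReal_ne_top]

lemma integral_cos_add_two_mul_uniformPhase (c : ℝ) :
    ∫ b, cos (c + 2 * b) ∂uniformPhase = 0 := by
  have h_period : ∫ b in (0)..(2 * π), cos (c + 2 * b) = 0 := by
    rw [intervalIntegral.integral_comp_add_mul cos two_ne_zero, integral_cos,
      show c + 2 * (2 * π) = c + 2 * π + 2 * π by ring, sin_add_two_pi, sin_add_two_pi]
    simp
  rw [uniformPhase, integral_smul_measure, integral_Icc_eq_integral_Ioc,
    ← intervalIntegral.integral_of_le (by positivity), h_period, smul_zero]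

lemma integral_two_mul_cos_mul_cos_uniformPhase (A B : ℝ) :
    ∫ b, 2 * cos (A + b) * cos (B + b) ∂uniformPhase = cos (A - B) := by
  have h_prod_to_sum : ∀ b, 2 * cos (A + b) * cos (B + b) = cos (A - B) + cos (A + B + 2 * b) := by
    intro b
    have h_sub := cos_sub (A + b) (B + b)
    have h_add := cos_add (A + b) (B + b)
    rw [show A + b - (B + b) = A - B by ring] at h_sub
    rw [show A + b + (B + b) = A + B + 2 * b by ring] at h_add
    linarith
  have h_int : Integrable (fun b ↦ cos (A + B + 2 * b)) uniformPhase :=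
    (integrable_const 1).mono' (by fun_prop) (ae_of_all _ fun b ↦ abs_cos_le_one _)
  simp_rw [h_prod_to_sum]
  rw [integral_add (integrable_const _) h_int, integral_cos_add_two_mul_uniformPhase, add_zero,
    integral_const, probReal_univ, one_smul]

section RandomFourierFeatures

variable {E : Type*} [NormedAddCommGroup E] [InnerProductSpace ℝ E]

noncomputable def rffSummand (x x' : E) (q : E × ℝ) : ℝ :=
  2 * cos (⟪q.1, x⟫ + q.2) * cos (⟪q.1, x'⟫ + q.2)

lemma abs_rffSummand_le (x x' : E) (q : E × ℝ) : |rffSummand x x' q| ≤ 2 := by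
  rw [rffSummand, abs_mul, abs_mul, abs_two]
  nlinarith [abs_cos_le_one (⟪q.1, x⟫ + q.2), abs_cos_le_one (⟪q.1, x'⟫ + q.2),
    abs_nonneg (cos (⟪q.1, x⟫ + q.2)), abs_nonneg (cos (⟪q.1, x'⟫ + q.2))]

variable [MeasurableSpace E] [OpensMeasurableSpace E]

lemma measurable_rffSummand (x x' : E) : Measurable (rffSummand x x') := by
  unfold rffSummand
  fun_prop

lemma integral_rffSummand (Λ : Measure E) [IsFiniteMeasure Λ] (x x' : E) :
    ∫ q, rffSummand x x' q ∂Λ.prod uniformPhase = ∫ ω, cos ⟪ω, x - x'⟫ ∂Λ := by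
  have h_int : Integrable (rffSummand x x') (Λ.prod uniformPhase) :=
    (integrable_const 2).mono' (measurable_rffSummand x x').aestronglyMeasurable
      (ae_of_all _ (abs_rffSummand_le x x'))
  rw [integral_prod _ h_int]
  congr with ω
  rw [inner_sub_right, ← integral_two_mul_cos_mul_cos_uniformPhase]
  rfl

end RandomFourierFeatures

/-- Hoeffding bound for random Fourier features.  Let `Λ` be a probability measure on
`ℝⁿ`, `μ` the uniform probability measure on `[0, 2π]`, and fix `x, x' ∈ ℝⁿ`.  Let
`(ω i, b i)` for `i = 1, …, D` be i.i.d. with common law `Λ ⊗ μ`, and let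
`k̂_D(x,x') = (1/D) ∑_i 2 cos(⟪ω i, x⟫ + b i) cos(⟪ω i, x'⟫ + b i)` and
`k(x,x') = ∫ cos⟪ω, x − x'⟫ dΛ(ω)`.  Then for every `ε > 0`,
`P(|k̂_D(x,x') − k(x,x')| ≥ ε) ≤ 2 exp(−D ε²/8)`. -/
theorem random_fourier_features_hoeffding_bound
    (n : ℕ) (Λ : Measure (EuclideanSpace ℝ (Fin n))) [IsProbabilityMeasure Λ]
    {Ω : Type*} [MeasurableSpace Ω] (P : Measure Ω) [IsProbabilityMeasure P]
    (wb : ℕ → Ω → (EuclideanSpace ℝ (Fin n)) × ℝ)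
    (hmeas : ∀ i, Measurable (wb i))
    (hlaw : ∀ i, Measure.map (wb i) P =
      Λ.prod ((ENNReal.ofReal (2 * π))⁻¹ • volume.restrict (Set.Icc (0 : ℝ) (2 * π))))
    (hindep : iIndepFun wb P)
    (x x' : EuclideanSpace ℝ (Fin n)) (D : ℕ) (ε : ℝ) (hε : 0 < ε) :
    P {a | ε ≤ |(1 / (D : ℝ)) * ∑ i ∈ Finset.range D,
          2 * Real.cos (⟪(wb i a).1, x⟫ + (wb i a).2) *
            Real.cos (⟪(wb i a).1, x'⟫ + (wb i a).2) -
        ∫ ω, Real.cos ⟪ω, x - x'⟫ ∂Λ|} ≤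
      ENNReal.ofReal (2 * Real.exp (-(D : ℝ) * ε ^ 2 / 8)) := by
  have h_summand_mean : ∀ i, P[fun a ↦ rffSummand x x' (wb i a)] = ∫ ω, cos ⟪ω, x - x'⟫ ∂Λ := by
    intro i
    rw [← integral_map (hmeas i).aemeasurable
      (measurable_rffSummand x x').aestronglyMeasurable, hlaw i]
    exact integral_rffSummand Λ x x'
  have h_bound := measureReal_abs_average_sub_ge_le (μ := P)
    (hindep.comp (fun _ ↦ rffSummand x x') fun _ ↦ measurable_rffSummand x x')
    (fun i ↦ ((measurable_rffSummand x x').comp (hmeas i)).aemeasurable)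
    (fun i ↦ ae_of_all _ fun a ↦ abs_le.mp (abs_rffSummand_le x x' (wb i a)))
    h_summand_mean D hε.le
  rw [← ofReal_measureReal]
  refine ENNReal.ofReal_le_ofReal (h_bound.trans_eq ?_)
  ring_nf
end
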